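/- Let σ ∈ (1,2), c > 0, and let Φ_c be the complex endpoint soliton of gDNLS. Then -2σ·Im∫_ℝ |Φ_c|^{2σ}Φ_c ∂ₓΦ̄_c dx = -2σ(2-σ)c² M(Φ_c) < 0. -/

import Mathlib

open MeasureTheory Complex

noncomputable def phi (σ c x : ℝ) : ℝ :=
  (2*c*(σ+1) / (σ^2 * (c*x)^2 + 1)) ^ (1/(2*σ))

noncomputable def Phi (σ c : ℝ) (x : ℝ) : ℂ :=
  (phi σ c x : ℂ) *
    Complex.exp (Complex.I * ((c/2) * x : ℝ)
      - (Complex.I / (2*σ + 2)) * ((∫ y in Set.Iio x, (phi σ c y) ^ (2*σ) : ℝ) : ℂ))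

noncomputable def Mass (σ c : ℝ) : ℝ := (1/2) * ∫ x : ℝ, ‖Phi σ c x‖^2

/-!
Write `Q = σ²c²x² + 1` and `a = 2c(σ+1)`. Then `Φ_c = φ e^{iθ}` with `φ^{2σ} = a Q⁻¹` and
`θ' = c/2 - φ^{2σ}/(2σ+2)`, so the imaginary part of `|Φ_c|^{2σ} Φ_c ∂ₓΦ̄_c` is `-φ^{2σ} φ² θ'`, a
combination of `Q^{-(1/σ+1)}` and `Q^{-(1/σ+2)}`, while `M(Φ_c)` is a multiple of `∫ Q^{-1/σ}`.
Integrating `(x Q^{-p})'` over `ℝ` gives `2p ∫ Q^{-(p+1)} = (2p-1) ∫ Q^{-p}`, and two steps of this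
recursion turn the imaginary part into `(2-σ) c² M(Φ_c)`. The bound `σ < 2` is exactly the
integrability of `Q^{-1/σ}`, i.e. the finiteness (and positivity) of the mass.
-/

open Set Filter Topology

noncomputable def invQuadPow (b p x : ℝ) : ℝ := (b * x ^ 2 + 1) ^ (-p)

section invQuadPow

variable {b p q : ℝ}

lemma mul_sq_add_one_pos (hb : 0 ≤ b) (x : ℝ) : 0 < b * x ^ 2 + 1 := by positivity

lemma invQuadPow_pos (hb : 0 ≤ b) (x : ℝ) : 0 < invQuadPow b p x :=
  Real.rpow_pos_of_pos (mul_sq_add_one_pos hb x) _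

lemma invQuadPow_mul (hb : 0 ≤ b) (x : ℝ) :
    invQuadPow b p x * invQuadPow b q x = invQuadPow b (p + q) x := by
  rw [invQuadPow, invQuadPow, invQuadPow, ← Real.rpow_add (mul_sq_add_one_pos hb x), neg_add]

lemma invQuadPow_neg_one (b x : ℝ) : invQuadPow b (-1) x = b * x ^ 2 + 1 := by
  rw [invQuadPow, neg_neg, Real.rpow_one]

lemma continuous_invQuadPow (hb : 0 ≤ b) : Continuous (invQuadPow b p) :=
  (by fun_prop : Continuous fun x : ℝ => b * x ^ 2 + 1).rpow_const
    fun x => Or.inl (mul_sq_add_one_pos hb x).ne'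

lemma hasDerivAt_invQuadPow (hb : 0 ≤ b) (x : ℝ) :
    HasDerivAt (invQuadPow b p) (-(2 * b * p) * (x * invQuadPow b (p + 1) x)) x := by
  have hQ : HasDerivAt (fun x : ℝ => b * x ^ 2 + 1) (2 * b * x) x := by
    simpa [mul_comm, mul_left_comm, mul_assoc] using
      ((hasDerivAt_pow 2 x).const_mul b).add_const 1
  refine (hQ.rpow_const (p := -p) (Or.inl (mul_sq_add_one_pos hb x).ne')).congr_deriv ?_
  rw [invQuadPow, show -p - 1 = -(p + 1) by ring]
  ring

lemma integrable_invQuadPow (hb : 0 < b) (hp : 1 / 2 < p) : Integrable (invQuadPow b p) := by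
  have h := (integrable_rpow_neg_one_add_norm_sq (E := ℝ) (μ := volume) (r := 2 * p)
    (by rw [Module.finrank_self, Nat.cast_one]; linarith)).comp_mul_left' (Real.sqrt_pos.2 hb).ne'
  refine h.congr (ae_of_all _ fun x => ?_)
  simp only [invQuadPow, Real.norm_eq_abs, sq_abs, mul_pow, Real.sq_sqrt hb.le]
  rw [add_comm]
  congr 1
  ring

lemma sqrt_mul_abs_mul_invQuadPow_le (hb : 0 ≤ b) (x : ℝ) :
    √b * |x * invQuadPow b p x| ≤ invQuadPow b (p - 1 / 2) x := by
  have hx : √b * |x| ≤ invQuadPow b (-(1 / 2)) x := by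
    rw [invQuadPow, neg_neg, ← Real.sqrt_eq_rpow, ← Real.sqrt_sq_eq_abs, ← Real.sqrt_mul hb]
    exact Real.sqrt_le_sqrt (by linarith)
  calc √b * |x * invQuadPow b p x| = √b * |x| * invQuadPow b p x := by
        rw [abs_mul, abs_of_pos (invQuadPow_pos hb x), mul_assoc]
    _ ≤ invQuadPow b (-(1 / 2)) x * invQuadPow b p x :=
        mul_le_mul_of_nonneg_right hx (invQuadPow_pos hb x).le
    _ = invQuadPow b (p - 1 / 2) x := by rw [invQuadPow_mul hb]; ring_nf

lemma integrable_mul_invQuadPow (hb : 0 < b) (hp : 1 < p) :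
    Integrable fun x => x * invQuadPow b p x := by
  have hp' : 1 / 2 < p - 1 / 2 := by linarith
  refine ((integrable_invQuadPow hb hp').const_mul (√b)⁻¹).mono'
    (continuous_id.mul (continuous_invQuadPow hb.le)).aestronglyMeasurable
    (ae_of_all _ fun x => ?_)
  rw [Real.norm_eq_abs, ← div_eq_inv_mul, le_div_iff₀' (Real.sqrt_pos.2 hb)]
  exact sqrt_mul_abs_mul_invQuadPow_le hb.le x

lemma tendsto_invQuadPow_cocompact (hb : 0 < b) (hp : 0 < p) :
    Tendsto (invQuadPow b p) (cocompact ℝ) (𝓝 0) := by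
  have hQ : Tendsto (fun x : ℝ => b * x ^ 2 + 1) (cocompact ℝ) atTop := by
    refine tendsto_atTop_add_const_right _ 1 (Tendsto.const_mul_atTop hb ?_)
    refine ((tendsto_pow_atTop two_ne_zero).comp tendsto_norm_cocompact_atTop).congr fun x => ?_
    simp [Real.norm_eq_abs, sq_abs]
  exact (tendsto_rpow_neg_atTop hp).comp hQ

lemma tendsto_mul_invQuadPow_cocompact (hb : 0 < b) (hp : 1 / 2 < p) :
    Tendsto (fun x => x * invQuadPow b p x) (cocompact ℝ) (𝓝 0) := by
  have hp' : 0 < p - 1 / 2 := by linarith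
  refine squeeze_zero_norm (fun x => ?_)
    (by simpa only [mul_zero] using (tendsto_invQuadPow_cocompact hb hp').const_mul (√b)⁻¹)
  rw [Real.norm_eq_abs, ← div_eq_inv_mul, le_div_iff₀' (Real.sqrt_pos.2 hb)]
  exact sqrt_mul_abs_mul_invQuadPow_le hb.le x

lemma integral_invQuadPow_add_one (hb : 0 < b) (hp : 1 / 2 < p) :
    2 * p * ∫ x, invQuadPow b (p + 1) x = (2 * p - 1) * ∫ x, invQuadPow b p x := by
  have hL := integrable_invQuadPow hb hp
  have hL₁ := integrable_invQuadPow hb (p := p + 1) (by linarith)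
  have hderiv : ∀ x, HasDerivAt (fun x => x * invQuadPow b p x)
      ((1 - 2 * p) * invQuadPow b p x + 2 * p * invQuadPow b (p + 1) x) x := by
    intro x
    refine ((hasDerivAt_id x).mul (hasDerivAt_invQuadPow hb.le x)).congr_deriv ?_
    have hQ : invQuadPow b (p + 1) x * (b * x ^ 2 + 1) = invQuadPow b p x := by
      rw [← invQuadPow_neg_one, invQuadPow_mul hb.le, add_neg_cancel_right]
    simp only [id_eq, one_mul]
    linear_combination (-(2 * p)) * hQ
  have h := integral_of_hasDerivAt_of_tendsto hderiv
    ((hL.const_mul _).add (hL₁.const_mul _))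
    ((tendsto_mul_invQuadPow_cocompact hb (by linarith)).mono_left atBot_le_cocompact)
    ((tendsto_mul_invQuadPow_cocompact hb (by linarith)).mono_left atTop_le_cocompact)
  rw [integral_add (hL.const_mul _) (hL₁.const_mul _), integral_const_mul,
    integral_const_mul, sub_zero] at h
  linarith

lemma integral_invQuadPow_pos (hb : 0 < b) (hp : 1 / 2 < p) : 0 < ∫ x, invQuadPow b p x :=
  integral_pos_of_integrable_nonneg_nonzero (x := 0) (continuous_invQuadPow hb.le)
    (integrable_invQuadPow hb hp) (fun x => (invQuadPow_pos hb.le x).le)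
    (invQuadPow_pos hb.le 0).ne'

end invQuadPow

lemma hasDerivAt_integral_Iio {E : Type*} [NormedAddCommGroup E] [NormedSpace ℝ E]
    [CompleteSpace E] {f : ℝ → E} (hfi : Integrable f) (hfc : Continuous f) (x : ℝ) :
    HasDerivAt (fun t => ∫ y in Iio t, f y) (f x) x := by
  have h : (fun t => ∫ y in Iio t, f y) = fun t => (∫ y in Iic 0, f y) + ∫ y in 0..t, f y := by
    funext t
    rw [← integral_Iic_eq_integral_Iio, ← intervalIntegral.integral_Iic_sub_Iic hfi.integrableOn
      hfi.integrableOn, add_sub_cancel]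
  rw [h]
  exact (intervalIntegral.integral_hasDerivAt_right hfi.intervalIntegrable
    (hfc.stronglyMeasurableAtFilter _ _) hfc.continuousAt).const_add _

lemma hasDerivAt_ofReal_mul_exp {r θ : ℝ → ℝ} {r' θ' x : ℝ} (hr : HasDerivAt r r' x)
    (hθ : HasDerivAt θ θ' x) :
    HasDerivAt (fun y => (r y : ℂ) * exp (θ y * I)) ((r' + r x * θ' * I) * exp (θ x * I)) x :=
  (hr.ofReal_comp.mul (hθ.ofReal_comp.mul_const I).cexp).congr_deriv (by ring)

lemma ofReal_mul_exp_mul_conj (r r' θ θ' : ℝ) :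
    r * exp (θ * I) * (starRingEnd ℂ) ((r' + r * θ' * I) * exp (θ * I))
      = ↑(r * r') - ↑(r ^ 2 * θ') * I := by
  have he : exp (θ * I) * (starRingEnd ℂ) (exp (θ * I)) = 1 := by
    rw [Complex.mul_conj, Complex.normSq_eq_norm_sq, norm_exp_ofReal_mul_I]
    norm_num
  simp only [map_mul, map_add, conj_ofReal, conj_I]
  push_cast
  linear_combination (r * (r' - r * θ' * I)) * he

lemma im_integral_ofReal_sub_ofReal_mul_I {f g : ℝ → ℝ} (hf : Integrable f)
    (hg : Integrable g) : (∫ x, ((f x : ℂ) - (g x : ℂ) * I)).im = -∫ x, g x := by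
  -- restated so that the coercion is `Complex.ofReal`, not the `RCLike` one `rw` cannot match
  have hf' : Integrable fun x => (f x : ℂ) := hf.ofReal
  have hg' : Integrable fun x => (g x : ℂ) * I := hg.ofReal.mul_const I
  rw [integral_sub hf' hg', integral_mul_const, integral_complex_ofReal, integral_complex_ofReal]
  simp

section soliton

variable {σ c : ℝ}

lemma phi_nonneg (hc : 0 ≤ c) (hσ : 0 ≤ σ) (x : ℝ) : 0 ≤ phi σ c x :=
  Real.rpow_nonneg (by positivity) _

lemma phi_eq_mul_invQuadPow (hc : 0 ≤ c) (hσ : 0 ≤ σ) (x : ℝ) :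
    phi σ c x = (2 * c * (σ + 1)) ^ (1 / (2 * σ)) * invQuadPow (σ ^ 2 * c ^ 2) (1 / (2 * σ)) x := by
  rw [phi, invQuadPow, show σ ^ 2 * (c * x) ^ 2 + 1 = σ ^ 2 * c ^ 2 * x ^ 2 + 1 by ring,
    Real.div_rpow (by positivity) (by positivity), Real.rpow_neg (by positivity), div_eq_mul_inv]

lemma phi_rpow_two_mul (hc : 0 ≤ c) (hσ : 0 < σ) (x : ℝ) :
    phi σ c x ^ (2 * σ) = 2 * c * (σ + 1) * invQuadPow (σ ^ 2 * c ^ 2) 1 x := by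
  rw [phi, ← Real.rpow_mul (by positivity), one_div_mul_cancel (by positivity), Real.rpow_one,
    invQuadPow, Real.rpow_neg_one, div_eq_mul_inv]
  ring_nf

lemma phi_sq (hc : 0 < c) (hσ : 0 < σ) (x : ℝ) :
    phi σ c x ^ 2 = (2 * c * (σ + 1)) ^ (1 / σ) * invQuadPow (σ ^ 2 * c ^ 2) (1 / σ) x := by
  have hs : 1 / (2 * σ) + 1 / (2 * σ) = 1 / σ := by field_simp; ring
  rw [phi_eq_mul_invQuadPow hc.le hσ.le, mul_pow, sq, sq, ← Real.rpow_add (by positivity),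
    invQuadPow_mul (by positivity), hs]

lemma hasDerivAt_phi (hc : 0 ≤ c) (hσ : 0 < σ) (x : ℝ) :
    HasDerivAt (phi σ c) (-(σ * c ^ 2) * ((2 * c * (σ + 1)) ^ (1 / (2 * σ)) *
      (x * invQuadPow (σ ^ 2 * c ^ 2) (1 / (2 * σ) + 1) x))) x := by
  rw [funext (phi_eq_mul_invQuadPow hc hσ.le)]
  refine ((hasDerivAt_invQuadPow (by positivity) x).const_mul _).congr_deriv ?_
  field_simp

noncomputable def phase (σ c x : ℝ) : ℝ :=
  c / 2 * x - (∫ y in Iio x, phi σ c y ^ (2 * σ)) / (2 * σ + 2)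

lemma Phi_eq_polar (σ c x : ℝ) : Phi σ c x = phi σ c x * exp (phase σ c x * I) := by
  rw [Phi, phase]
  push_cast
  ring_nf

lemma norm_Phi (hc : 0 ≤ c) (hσ : 0 ≤ σ) (x : ℝ) : ‖Phi σ c x‖ = phi σ c x := by
  rw [Phi_eq_polar, norm_mul, norm_exp_ofReal_mul_I, mul_one, Complex.norm_real,
    Real.norm_of_nonneg (phi_nonneg hc hσ x)]

lemma hasDerivAt_phase (hc : 0 < c) (hσ : 0 < σ) (x : ℝ) :
    HasDerivAt (phase σ c) (c / 2 - phi σ c x ^ (2 * σ) / (2 * σ + 2)) x := by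
  have hb : 0 < σ ^ 2 * c ^ 2 := by positivity
  have hf := funext (phi_rpow_two_mul hc.le hσ)
  have hG := hasDerivAt_integral_Iio (f := fun y => phi σ c y ^ (2 * σ))
    (by rw [hf]; exact (integrable_invQuadPow hb (by norm_num)).const_mul _)
    (by rw [hf]; exact continuous_const.mul (continuous_invQuadPow hb.le)) x
  exact (((hasDerivAt_id' x).const_mul (c / 2)).sub (hG.div_const _)).congr_deriv (by simp)

lemma phi_rpow_mul_phi_mul_deriv (hc : 0 < c) (hσ : 0 < σ) (x : ℝ) :
    phi σ c x ^ (2 * σ) * (phi σ c x * (-(σ * c ^ 2) * ((2 * c * (σ + 1)) ^ (1 / (2 * σ)) *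
      (x * invQuadPow (σ ^ 2 * c ^ 2) (1 / (2 * σ) + 1) x))))
      = -(σ * c ^ 2) * ((2 * c * (σ + 1)) ^ (1 / σ) * (2 * c * (σ + 1))) *
          (x * invQuadPow (σ ^ 2 * c ^ 2) (1 / σ + 1 + 1) x) := by
  have hb : 0 ≤ σ ^ 2 * c ^ 2 := by positivity
  have hs : 1 / (2 * σ) + 1 / (2 * σ) = 1 / σ := by field_simp; ring
  have hA : (2 * c * (σ + 1)) ^ (1 / (2 * σ)) * (2 * c * (σ + 1)) ^ (1 / (2 * σ))
      = (2 * c * (σ + 1)) ^ (1 / σ) := by rw [← Real.rpow_add (by positivity), hs]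
  have hL : invQuadPow (σ ^ 2 * c ^ 2) 1 x * invQuadPow (σ ^ 2 * c ^ 2) (1 / (2 * σ)) x *
      invQuadPow (σ ^ 2 * c ^ 2) (1 / (2 * σ) + 1) x
      = invQuadPow (σ ^ 2 * c ^ 2) (1 / σ + 1 + 1) x := by
    rw [invQuadPow_mul hb, invQuadPow_mul hb, ← hs]
    ring_nf
  rw [phi_rpow_two_mul hc.le hσ, phi_eq_mul_invQuadPow hc.le hσ.le, ← hA, ← hL]
  ring

lemma phi_rpow_mul_sq_mul_deriv_phase (hc : 0 < c) (hσ : 0 < σ) (x : ℝ) :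
    phi σ c x ^ (2 * σ) * (phi σ c x ^ 2 * (c / 2 - phi σ c x ^ (2 * σ) / (2 * σ + 2)))
      = (2 * c * (σ + 1)) ^ (1 / σ) *
          (c / 2 * (2 * c * (σ + 1)) * invQuadPow (σ ^ 2 * c ^ 2) (1 / σ + 1) x
            - (2 * c * (σ + 1)) ^ 2 / (2 * σ + 2) *
              invQuadPow (σ ^ 2 * c ^ 2) (1 / σ + 1 + 1) x) := by
  have hb : 0 ≤ σ ^ 2 * c ^ 2 := by positivity
  have hL₁ := invQuadPow_mul hb x (p := 1 / σ) (q := 1)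
  have hL₂ : invQuadPow (σ ^ 2 * c ^ 2) (1 / σ) x * invQuadPow (σ ^ 2 * c ^ 2) 1 x *
      invQuadPow (σ ^ 2 * c ^ 2) 1 x = invQuadPow (σ ^ 2 * c ^ 2) (1 / σ + 1 + 1) x := by
    rw [invQuadPow_mul hb, invQuadPow_mul hb]
  rw [phi_sq hc hσ, phi_rpow_two_mul hc.le hσ, ← hL₂, ← hL₁]
  ring

lemma integrand_eq (hc : 0 < c) (hσ : 0 < σ) (x : ℝ) :
    ((‖Phi σ c x‖ ^ (2 * σ) : ℝ) : ℂ) * (Phi σ c x * (starRingEnd ℂ) (deriv (Phi σ c) x))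
      = ((-(σ * c ^ 2) * ((2 * c * (σ + 1)) ^ (1 / σ) * (2 * c * (σ + 1))) *
          (x * invQuadPow (σ ^ 2 * c ^ 2) (1 / σ + 1 + 1) x) : ℝ) : ℂ)
        - (((2 * c * (σ + 1)) ^ (1 / σ) *
          (c / 2 * (2 * c * (σ + 1)) * invQuadPow (σ ^ 2 * c ^ 2) (1 / σ + 1) x
            - (2 * c * (σ + 1)) ^ 2 / (2 * σ + 2) * invQuadPow (σ ^ 2 * c ^ 2) (1 / σ + 1 + 1) x)
          : ℝ) : ℂ) * I := by
  rw [norm_Phi hc.le hσ.le, funext (Phi_eq_polar σ c),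
    (hasDerivAt_ofReal_mul_exp (hasDerivAt_phi hc.le hσ x) (hasDerivAt_phase hc hσ x)).deriv,
    ofReal_mul_exp_mul_conj, ← phi_rpow_mul_phi_mul_deriv hc hσ,
    ← phi_rpow_mul_sq_mul_deriv_phase hc hσ]
  push_cast
  ring

lemma im_integral_integrand (hc : 0 < c) (hσ : 0 < σ) :
    (∫ x : ℝ, ((‖Phi σ c x‖ ^ (2 * σ) : ℝ) : ℂ) *
        (Phi σ c x * (starRingEnd ℂ) (deriv (Phi σ c) x))).im
      = -((2 * c * (σ + 1)) ^ (1 / σ) *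
          (c / 2 * (2 * c * (σ + 1)) * (∫ x, invQuadPow (σ ^ 2 * c ^ 2) (1 / σ + 1) x)
            - (2 * c * (σ + 1)) ^ 2 / (2 * σ + 2) *
              ∫ x, invQuadPow (σ ^ 2 * c ^ 2) (1 / σ + 1 + 1) x)) := by
  have hb : 0 < σ ^ 2 * c ^ 2 := by positivity
  have hσ' : 0 < 1 / σ := by positivity
  have hL₁ := integrable_invQuadPow hb (p := 1 / σ + 1) (by linarith)
  have hL₂ := integrable_invQuadPow hb (p := 1 / σ + 1 + 1) (by linarith)
  simp_rw [integrand_eq hc hσ]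
  rw [im_integral_ofReal_sub_ofReal_mul_I
      ((integrable_mul_invQuadPow hb (by linarith)).const_mul _),
    integral_const_mul, integral_sub (hL₁.const_mul _) (hL₂.const_mul _),
    integral_const_mul, integral_const_mul]
  exact ((hL₁.const_mul _).sub (hL₂.const_mul _)).const_mul _

lemma Mass_eq (hc : 0 < c) (hσ : 0 < σ) :
    Mass σ c
      = 1 / 2 * ((2 * c * (σ + 1)) ^ (1 / σ) * ∫ x, invQuadPow (σ ^ 2 * c ^ 2) (1 / σ) x) := by
  simp_rw [Mass, norm_Phi hc.le hσ.le, phi_sq hc hσ, integral_const_mul]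

lemma Mass_pos (hc : 0 < c) (hσ : 0 < σ) (hσ₂ : σ < 2) : 0 < Mass σ c := by
  have h : 1 / 2 < 1 / σ := by rw [div_lt_div_iff₀ two_pos hσ]; linarith
  rw [Mass_eq hc hσ]
  exact mul_pos one_half_pos (mul_pos (by positivity) (integral_invQuadPow_pos (by positivity) h))

lemma im_integral_integrand_eq_mass (hc : 0 < c) (hσ : 0 < σ) (hσ₂ : σ < 2) :
    (∫ x : ℝ, ((‖Phi σ c x‖ ^ (2 * σ) : ℝ) : ℂ) *
        (Phi σ c x * (starRingEnd ℂ) (deriv (Phi σ c) x))).im = (2 - σ) * c ^ 2 * Mass σ c := by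
  have hb : 0 < σ ^ 2 * c ^ 2 := by positivity
  have h : 1 / 2 < 1 / σ := by rw [div_lt_div_iff₀ two_pos hσ]; linarith
  set J₀ := ∫ x, invQuadPow (σ ^ 2 * c ^ 2) (1 / σ) x
  set J₁ := ∫ x, invQuadPow (σ ^ 2 * c ^ 2) (1 / σ + 1) x
  set J₂ := ∫ x, invQuadPow (σ ^ 2 * c ^ 2) (1 / σ + 1 + 1) x
  have hσσ : σ * (1 / σ) = 1 := by field_simp
  have e₁ : 2 * J₁ = (2 - σ) * J₀ := by
    linear_combination σ * integral_invQuadPow_add_one hb h + (2 * J₀ - 2 * J₁) * hσσ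
  have e₂ : 2 * (σ + 1) * J₂ = (2 + σ) * J₁ := by
    linear_combination σ * integral_invQuadPow_add_one hb (p := 1 / σ + 1) (by linarith)
      + (2 * J₁ - 2 * J₂) * hσσ
  have ha : (2 * c * (σ + 1)) ^ 2 / (2 * σ + 2) = 2 * c ^ 2 * (σ + 1) := by field_simp
  rw [im_integral_integrand hc hσ, Mass_eq hc hσ, ha]
  linear_combination ((2 * c * (σ + 1)) ^ (1 / σ) * c ^ 2) * e₂
    + ((2 * c * (σ + 1)) ^ (1 / σ) * c ^ 2 / 2) * e₁

end soliton

theorem stmt12 (σ c : ℝ) (hσ : σ ∈ Set.Ioo (1:ℝ) 2) (hc : 0 < c) :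
    (-(2*σ) * (∫ x : ℝ, ((‖Phi σ c x‖ ^ (2*σ) : ℝ) : ℂ) *
          (Phi σ c x * (starRingEnd ℂ) (deriv (Phi σ c) x))).im
        = -(2*σ) * (2 - σ) * c^2 * Mass σ c)
      ∧ -(2*σ) * (2 - σ) * c^2 * Mass σ c < 0 := by
  obtain ⟨hσ₁, hσ₂⟩ := hσ
  have hσ : 0 < σ := by linarith
  have hM := Mass_pos hc hσ hσ₂
  constructor
  · rw [im_integral_integrand_eq_mass hc hσ hσ₂]
    ring
  · have h := mul_pos (mul_pos (mul_pos hσ (sub_pos.2 hσ₂)) (pow_pos hc 2)) hM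
    linarith
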